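/- arXiv:0804.4195 — 4 statements merged into one kernel-verified Lean document; each statement's English description precedes it below -/
import Mathlib

section
/- Let t ≥ 2 be an integer, P > 0, h, g ∈ ℂ^t, and let e₁ be a unit-norm generalized eigenvector of the pencil (I + P h h*, I + P g g*) with eigenvalue λ₁, and assume λ₁ ≥ 1. Define γ₁(α) = (1 + αP|h* e₁|²)/(1 + αP|g* e₁|²) for α ∈ [0,1]. Then γ₁(α) ≤ λ₁ for every α ∈ [0,1], and γ₁(1) = λ₁. Consequently the maximum over α ∈ [0,1] of log₂ γ₁(α) equals log₂ λ₁ and is attained at α = 1 (Corollary 1: the maximum secrecy rate of user 1 is R₁,max = log₂ λ₁). -/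
/-!
Pairing the pencil equation `(I + P h h*) e₁ = λ₁ (I + P g g*) e₁` with `e₁` gives
`1 + A = λ₁ (1 + B)` for `A = P|h* e₁|²`, `B = P|g* e₁|²`. Hence
`1 + αA = (1 - α) + α λ₁ (1 + B) ≤ λ₁ ((1 - α) + α (1 + B)) = λ₁ (1 + αB)` as `λ₁ ≥ 1`,
with equality at `α = 1`; the statements about `log₂` follow by monotonicity.
-/

open scoped InnerProductSpace

/-- `γ₁(α) = (1 + αP|h* e₁|²)/(1 + αP|g* e₁|²)`. -/
noncomputable def gamma1 (t : ℕ) (P : ℝ) (h g e1 : EuclideanSpace ℂ (Fin t)) (α : ℝ) : ℝ :=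
  (1 + α * P * ‖⟪h, e1⟫_ℂ‖ ^ 2) / (1 + α * P * ‖⟪g, e1⟫_ℂ‖ ^ 2)

section PencilRayleigh

variable {𝕜 E : Type*} [RCLike 𝕜] [NormedAddCommGroup E] [InnerProductSpace 𝕜 E]

theorem re_inner_add_inner_smul (P : ℝ) (h e : E) :
    RCLike.re ⟪e, e + ((P : 𝕜) * ⟪h, e⟫_𝕜) • h⟫_𝕜 = ‖e‖ ^ 2 + P * ‖⟪h, e⟫_𝕜‖ ^ 2 := by
  rw [inner_add_right, inner_smul_right, map_add, inner_self_eq_norm_sq, mul_assoc,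
    ← inner_conj_symm e h, RCLike.mul_conj, RCLike.re_ofReal_mul]
  norm_cast

theorem norm_sq_add_eq_of_pencil_eigen (P lam : ℝ) (h g e : E)
    (heig : e + ((P : 𝕜) * ⟪h, e⟫_𝕜) • h = (lam : 𝕜) • (e + ((P : 𝕜) * ⟪g, e⟫_𝕜) • g)) :
    ‖e‖ ^ 2 + P * ‖⟪h, e⟫_𝕜‖ ^ 2 = lam * (‖e‖ ^ 2 + P * ‖⟪g, e⟫_𝕜‖ ^ 2) := by
  rw [← re_inner_add_inner_smul, ← re_inner_add_inner_smul, heig, inner_smul_right,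
    RCLike.re_ofReal_mul]

end PencilRayleigh

theorem one_add_mul_div_one_add_mul_le {a b lam α : ℝ} (hb : 0 ≤ b) (hlam : 1 ≤ lam)
    (hab : 1 + a = lam * (1 + b)) (hα : α ∈ Set.Icc (0 : ℝ) 1) :
    (1 + α * a) / (1 + α * b) ≤ lam := by
  obtain ⟨hα0, hα1⟩ := hα
  rw [div_le_iff₀ (by positivity)]
  nlinarith [mul_le_mul_of_nonneg_right hlam (sub_nonneg.mpr hα1)]

theorem gamma1_pos (t : ℕ) {P : ℝ} (hP : 0 ≤ P) (h g e1 : EuclideanSpace ℂ (Fin t)) {α : ℝ}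
    (hα : 0 ≤ α) : 0 < gamma1 t P h g e1 α := by
  unfold gamma1
  positivity

theorem stmt_3_general (t : ℕ) (P : ℝ) (hP : 0 < P)
    (h g e1 : EuclideanSpace ℂ (Fin t)) (lam1 : ℝ)
    (he1 : ‖e1‖ = 1)
    (heig : e1 + ((P : ℂ) * ⟪h, e1⟫_ℂ) • h = (lam1 : ℂ) • (e1 + ((P : ℂ) * ⟪g, e1⟫_ℂ) • g))
    (hlam : 1 ≤ lam1) :
    (∀ α ∈ Set.Icc (0 : ℝ) 1, gamma1 t P h g e1 α ≤ lam1) ∧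
    gamma1 t P h g e1 1 = lam1 ∧
    (∀ α ∈ Set.Icc (0 : ℝ) 1,
      Real.logb 2 (gamma1 t P h g e1 α) ≤ Real.logb 2 lam1) ∧
    Real.logb 2 (gamma1 t P h g e1 1) = Real.logb 2 lam1 := by
  have hpencil : 1 + P * ‖⟪h, e1⟫_ℂ‖ ^ 2 = lam1 * (1 + P * ‖⟪g, e1⟫_ℂ‖ ^ 2) := by
    simpa only [he1, one_pow] using norm_sq_add_eq_of_pencil_eigen P lam1 h g e1 heig
  have hle : ∀ α ∈ Set.Icc (0 : ℝ) 1, gamma1 t P h g e1 α ≤ lam1 := fun α hα => by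
    simpa only [gamma1, mul_assoc] using
      one_add_mul_div_one_add_mul_le (by positivity) hlam hpencil hα
  have heq : gamma1 t P h g e1 1 = lam1 := by
    rw [gamma1, one_mul, div_eq_iff (by positivity)]
    exact hpencil
  refine ⟨hle, heq, fun α hα => ?_, by rw [heq]⟩
  exact Real.logb_le_logb_of_le one_lt_two (gamma1_pos t hP.le h g e1 hα.1) (hle α hα)

/-- Corollary 1: if `e₁` is a unit-norm generalized eigenvector of the pencil
`(I + P h h*, I + P g g*)` with eigenvalue `λ₁ ≥ 1`, then `γ₁(α) ≤ λ₁` for every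
`α ∈ [0,1]` and `γ₁(1) = λ₁`; consequently the maximum over `α ∈ [0,1]` of
`log₂ γ₁(α)` equals `log₂ λ₁` and is attained at `α = 1`
(`R₁,max = log₂ λ₁`). -/
theorem stmt_3 (t : ℕ) (ht : 2 ≤ t) (P : ℝ) (hP : 0 < P)
    (h g e1 : EuclideanSpace ℂ (Fin t)) (lam1 : ℝ)
    (he1 : ‖e1‖ = 1)
    (heig : e1 + ((P : ℂ) * ⟪h, e1⟫_ℂ) • h = (lam1 : ℂ) • (e1 + ((P : ℂ) * ⟪g, e1⟫_ℂ) • g))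
    (hlam : 1 ≤ lam1) :
    (∀ α ∈ Set.Icc (0 : ℝ) 1, gamma1 t P h g e1 α ≤ lam1) ∧
    gamma1 t P h g e1 1 = lam1 ∧
    (∀ α ∈ Set.Icc (0 : ℝ) 1,
      Real.logb 2 (gamma1 t P h g e1 α) ≤ Real.logb 2 lam1) ∧
    Real.logb 2 (gamma1 t P h g e1 1) = Real.logb 2 lam1 :=
  stmt_3_general t P hP h g e1 lam1 he1 heig hlam
end

section
/- Let t ≥ 1 be an integer, P > 0, h, g ∈ ℂ^t, and let e₁ be a unit-norm generalized eigenvector of the pencil (I + P h h*, I + P g g*) with eigenvalue λ₁. Define γ₁(α) = (1 + αP|h* e₁|²)/(1 + αP|g* e₁|²). If λ₁ ≥ 1 then γ₁(α) ≥ 1 for every α ∈ [0,1]; if λ₁ > 1 then γ₁(α) > 1 for every α ∈ (0,1]. In particular, under the condition λ₁ > 1 the secrecy rate bound log₂ γ₁(α) of the secret dirty-paper coding region is strictly positive for all α ∈ (0,1]. -/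
open scoped InnerProductSpace

/-!
Pairing the pencil equation `(I + P h h*) e₁ = λ₁ (I + P g g*) e₁` with the unit vector `e₁`
gives `1 + P|h* e₁|² = λ₁ (1 + P|g* e₁|²)`. Hence `λ₁ ≥ 1` (resp. `λ₁ > 1`) forces
`|g* e₁|² ≤ |h* e₁|²` (resp. `<`), and then `γ₁(α)` compares the two numbers
`1 + αP|h* e₁|²` and `1 + αP|g* e₁|²` with the same order.
-/

section Pencil

variable {E : Type*} [NormedAddCommGroup E] [InnerProductSpace ℂ E]

theorem inner_self_add_smul_inner_smul (P : ℝ) (h e : E) :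
    ⟪e, e + ((P : ℂ) * ⟪h, e⟫_ℂ) • h⟫_ℂ = ((‖e‖ ^ 2 + P * ‖⟪h, e⟫_ℂ‖ ^ 2 : ℝ) : ℂ) := by
  rw [inner_add_right, inner_smul_right, inner_self_eq_norm_sq_to_K, ← inner_conj_symm e h,
    mul_assoc, Complex.mul_conj']
  push_cast
  rfl

theorem one_add_mul_norm_inner_sq_eq_of_pencil {P lam : ℝ} {h g e : E} (he : ‖e‖ = 1)
    (heig : e + ((P : ℂ) * ⟪h, e⟫_ℂ) • h = (lam : ℂ) • (e + ((P : ℂ) * ⟪g, e⟫_ℂ) • g)) :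
    1 + P * ‖⟪h, e⟫_ℂ‖ ^ 2 = lam * (1 + P * ‖⟪g, e⟫_ℂ‖ ^ 2) := by
  have h_pair := congrArg (fun v => ⟪e, v⟫_ℂ) heig
  simp only [inner_smul_right, inner_self_add_smul_inner_smul, he, one_pow] at h_pair
  exact_mod_cast h_pair

end Pencil

section Real

variable {P lam a b : ℝ}

theorem le_of_one_add_mul_eq_mul_one_add_mul (hP : 0 < P) (hb : 0 ≤ b)
    (heq : 1 + P * a = lam * (1 + P * b)) (hlam : 1 ≤ lam) : b ≤ a := by
  have : P * b ≤ P * a := by nlinarith [mul_nonneg hP.le hb]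
  exact le_of_mul_le_mul_left this hP

theorem lt_of_one_add_mul_eq_mul_one_add_mul (hP : 0 < P) (hb : 0 ≤ b)
    (heq : 1 + P * a = lam * (1 + P * b)) (hlam : 1 < lam) : b < a := by
  have : P * b < P * a := by nlinarith [mul_nonneg hP.le hb]
  exact lt_of_mul_lt_mul_left this hP.le

end Real

section Gamma

variable {t : ℕ} {P α : ℝ} {h g e : EuclideanSpace ℂ (Fin t)}

theorem one_le_gamma1 (hα : 0 ≤ α) (hP : 0 ≤ P) (hgh : ‖⟪g, e⟫_ℂ‖ ^ 2 ≤ ‖⟪h, e⟫_ℂ‖ ^ 2) :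
    1 ≤ gamma1 t P h g e α := by
  have hαP : 0 ≤ α * P := mul_nonneg hα hP
  rw [gamma1, one_le_div (by positivity)]
  gcongr

theorem one_lt_gamma1 (hα : 0 < α) (hP : 0 < P) (hgh : ‖⟪g, e⟫_ℂ‖ ^ 2 < ‖⟪h, e⟫_ℂ‖ ^ 2) :
    1 < gamma1 t P h g e α := by
  have hαP : 0 < α * P := mul_pos hα hP
  rw [gamma1, one_lt_div (by positivity)]
  gcongr

end Gamma

theorem stmt_6_general (t : ℕ) (P : ℝ) (hP : 0 < P)
    (h g e1 : EuclideanSpace ℂ (Fin t)) (lam1 : ℝ)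
    (he1 : ‖e1‖ = 1)
    (heig : e1 + ((P : ℂ) * ⟪h, e1⟫_ℂ) • h = (lam1 : ℂ) • (e1 + ((P : ℂ) * ⟪g, e1⟫_ℂ) • g)) :
    (1 ≤ lam1 → ∀ α ∈ Set.Icc (0 : ℝ) 1, 1 ≤ gamma1 t P h g e1 α) ∧
    (1 < lam1 → ∀ α ∈ Set.Ioc (0 : ℝ) 1,
      1 < gamma1 t P h g e1 α ∧ 0 < Real.logb 2 (gamma1 t P h g e1 α)) := by
  have key := one_add_mul_norm_inner_sq_eq_of_pencil he1 heig
  refine ⟨fun hlam α hα => ?_, fun hlam α hα => ?_⟩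
  · exact one_le_gamma1 hα.1 hP.le
      (le_of_one_add_mul_eq_mul_one_add_mul hP (sq_nonneg _) key hlam)
  · have hγ : 1 < gamma1 t P h g e1 α := one_lt_gamma1 hα.1 hP
      (lt_of_one_add_mul_eq_mul_one_add_mul hP (sq_nonneg _) key hlam)
    exact ⟨hγ, Real.logb_pos one_lt_two hγ⟩

/-- If `e₁` is a unit-norm generalized eigenvector of the pencil
`(I + P h h*, I + P g g*)` with eigenvalue `λ₁`, then `λ₁ ≥ 1` implies `γ₁(α) ≥ 1`
for every `α ∈ [0,1]`, and `λ₁ > 1` implies `γ₁(α) > 1` for every `α ∈ (0,1]`;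
in particular, when `λ₁ > 1` the secrecy rate bound `log₂ γ₁(α)` of the secret
dirty-paper coding region is strictly positive for all `α ∈ (0,1]`. -/
theorem stmt_6 (t : ℕ) (ht : 1 ≤ t) (P : ℝ) (hP : 0 < P)
    (h g e1 : EuclideanSpace ℂ (Fin t)) (lam1 : ℝ)
    (he1 : ‖e1‖ = 1)
    (heig : e1 + ((P : ℂ) * ⟪h, e1⟫_ℂ) • h = (lam1 : ℂ) • (e1 + ((P : ℂ) * ⟪g, e1⟫_ℂ) • g)) :
    (1 ≤ lam1 → ∀ α ∈ Set.Icc (0 : ℝ) 1, 1 ≤ gamma1 t P h g e1 α) ∧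
    (1 < lam1 → ∀ α ∈ Set.Ioc (0 : ℝ) 1,
      1 < gamma1 t P h g e1 α ∧ 0 < Real.logb 2 (gamma1 t P h g e1 α)) :=
  stmt_6_general t P hP h g e1 lam1 he1 heig
end

section
/- Let t ≥ 1 be an integer, P > 0, h, g ∈ ℂ^t, α ∈ [0,1], and let e₁ ∈ ℂ^t be any unit vector. Set s = (1−α)P/(1 + αP|g* e₁|²) and r = (1−α)P/(1 + αP|h* e₁|²), and let c₂ ∈ ℂ^t be a unit vector with (I + s g g*) c₂ = γ₂ (I + r h h*) c₂ for some real γ₂. Define the covariance matrices K₁ = αP e₁ e₁* and K₂ = (1−α)P c₂ c₂*. Then: (i) tr(K₁ + K₂) = P; (ii) (1 + h* K₁ h)/(1 + g* K₁ g) = (1 + αP|h* e₁|²)/(1 + αP|g* e₁|²); and (iii) the secret dirty-paper coding rate expression satisfies [1 + g*(K₁+K₂)g]·[1 + h* K₁ h] / ( [1 + h*(K₁+K₂)h]·[1 + g* K₁ g] ) = γ₂. -/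
/-!
Both covariances are rank one, so each quadratic form `x* Kᵢ x` is a multiple of `|x* eᵢ|²`.
Splitting the power as `P = αP + (1 - α)P`, the factor `1 + g*(K₁ + K₂)g` becomes
`(1 + αP|g* e₁|²)(1 + s|g* c₂|²)`, and likewise for `h` with `r`. Hence the ratio in (iii)
reduces to `(1 + s|g* c₂|²) / (1 + r|h* c₂|²)`, which is `γ₂` by the generalized eigenvector
equation paired with the unit vector `c₂`.
-/

open Matrix

section RankOne

variable {𝕜 n : Type*} [RCLike 𝕜] [Fintype n]

theorem star_dotProduct_smul_vecMulVec_mulVec (c : ℝ) (u x : n → 𝕜) :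
    star x ⬝ᵥ ((c : 𝕜) • vecMulVec u (star u)) *ᵥ x = ((c * ‖star x ⬝ᵥ u‖ ^ 2 : ℝ) : 𝕜) := by
  rw [smul_mulVec, vecMulVec_mulVec, op_smul_eq_smul, dotProduct_smul, dotProduct_smul,
    star_dotProduct u, smul_eq_mul, smul_eq_mul, RCLike.star_def, RCLike.conj_mul]
  push_cast
  ring

theorem trace_smul_vecMulVec_star (c : 𝕜) {u : n → 𝕜} (hu : star u ⬝ᵥ u = 1) :
    (c • vecMulVec u (star u)).trace = c := by
  rw [trace_smul, trace_vecMulVec, dotProduct_comm, hu, smul_eq_mul, mul_one]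

theorem star_dotProduct_add_smul_of_unit (s : ℝ) (g : n → 𝕜) {c : n → 𝕜}
    (hc : star c ⬝ᵥ c = 1) :
    star c ⬝ᵥ (c + ((s : 𝕜) * (star g ⬝ᵥ c)) • g) = ((1 + s * ‖star g ⬝ᵥ c‖ ^ 2 : ℝ) : 𝕜) := by
  rw [dotProduct_add, dotProduct_smul, hc, star_dotProduct c g, smul_eq_mul, mul_assoc,
    RCLike.star_def, RCLike.mul_conj]
  push_cast
  ring

theorem generalized_eigenvalue_eq_of_unit {s r γ : ℝ} {g h c : n → 𝕜}
    (hc : star c ⬝ᵥ c = 1)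
    (heig : c + ((s : 𝕜) * (star g ⬝ᵥ c)) • g = (γ : 𝕜) • (c + ((r : 𝕜) * (star h ⬝ᵥ c)) • h)) :
    1 + s * ‖star g ⬝ᵥ c‖ ^ 2 = γ * (1 + r * ‖star h ⬝ᵥ c‖ ^ 2) := by
  have := congrArg (star c ⬝ᵥ ·) heig
  simp only [dotProduct_smul, star_dotProduct_add_smul_of_unit _ _ hc, smul_eq_mul] at this
  exact_mod_cast this

end RankOne

theorem div_eq_of_split_power {a b p G H s r γ : ℝ} (ha : 1 + a ≠ 0) (hb : 1 + b ≠ 0)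
    (hs : s = p / (1 + a)) (hr : r = p / (1 + b)) (hrH : 1 + r * H ≠ 0)
    (hγ : 1 + s * G = γ * (1 + r * H)) :
    (1 + (a + p * G)) * (1 + b) / ((1 + (b + p * H)) * (1 + a)) = γ := by
  have hsplit_a : 1 + (a + p * G) = (1 + a) * (1 + s * G) := by rw [hs]; field_simp; ring
  have hsplit_b : 1 + (b + p * H) = (1 + b) * (1 + r * H) := by rw [hr]; field_simp; ring
  rw [hsplit_a, hsplit_b, hγ]
  field_simp

theorem stmt_8_general (t : ℕ) (P : ℝ) (hP : 0 < P)
    (α : ℝ) (hα : α ∈ Set.Icc (0 : ℝ) 1)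
    (h g e1 c2 : Fin t → ℂ) (γ2 : ℝ)
    (he1 : star e1 ⬝ᵥ e1 = 1) (hc2 : star c2 ⬝ᵥ c2 = 1)
    (s r : ℝ)
    (hs : s = (1 - α) * P / (1 + α * P * ‖star g ⬝ᵥ e1‖ ^ 2))
    (hr : r = (1 - α) * P / (1 + α * P * ‖star h ⬝ᵥ e1‖ ^ 2))
    (heig : c2 + ((s : ℂ) * (star g ⬝ᵥ c2)) • g
      = (γ2 : ℂ) • (c2 + ((r : ℂ) * (star h ⬝ᵥ c2)) • h))
    (K1 K2 : Matrix (Fin t) (Fin t) ℂ)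
    (hK1 : K1 = ((α * P : ℝ) : ℂ) • vecMulVec e1 (star e1))
    (hK2 : K2 = (((1 - α) * P : ℝ) : ℂ) • vecMulVec c2 (star c2)) :
    (K1 + K2).trace = (P : ℂ) ∧
    (1 + star h ⬝ᵥ K1.mulVec h) / (1 + star g ⬝ᵥ K1.mulVec g)
      = (((1 + α * P * ‖star h ⬝ᵥ e1‖ ^ 2) / (1 + α * P * ‖star g ⬝ᵥ e1‖ ^ 2) : ℝ) : ℂ) ∧
    ((1 + star g ⬝ᵥ (K1 + K2).mulVec g) * (1 + star h ⬝ᵥ K1.mulVec h)) /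
      ((1 + star h ⬝ᵥ (K1 + K2).mulVec h) * (1 + star g ⬝ᵥ K1.mulVec g)) = (γ2 : ℂ) := by
  obtain ⟨hα0, hα1⟩ := hα
  have hαP : 0 ≤ α * P := mul_nonneg hα0 hP.le
  have hr0 : 0 ≤ r := hr ▸ div_nonneg (mul_nonneg (by linarith) hP.le) (by positivity)
  have hK1x (x : Fin t → ℂ) : star x ⬝ᵥ K1 *ᵥ x = ((α * P * ‖star x ⬝ᵥ e1‖ ^ 2 : ℝ) : ℂ) := by
    rw [hK1]; exact star_dotProduct_smul_vecMulVec_mulVec _ _ _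
  have hK2x (x : Fin t → ℂ) :
      star x ⬝ᵥ K2 *ᵥ x = (((1 - α) * P * ‖star x ⬝ᵥ c2‖ ^ 2 : ℝ) : ℂ) := by
    rw [hK2]; exact star_dotProduct_smul_vecMulVec_mulVec _ _ _
  refine ⟨?_, ?_, ?_⟩
  · rw [hK1, hK2, trace_add, trace_smul_vecMulVec_star _ he1,
      trace_smul_vecMulVec_star _ hc2]
    push_cast
    ring
  · rw [hK1x, hK1x]
    push_cast
    ring
  · simp only [add_mulVec, dotProduct_add, hK1x, hK2x]
    exact_mod_cast div_eq_of_split_power (by positivity) (by positivity) hs hr (by positivity)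
      (generalized_eigenvalue_eq_of_unit hc2 heig)

/-- Properties of the covariance matrix choice for the secret dirty-paper coding
scheme: with `K₁ = αP e₁ e₁*` and `K₂ = (1−α)P c₂ c₂*`, where `e₁` is a unit
vector and `c₂` is a unit generalized eigenvector of the pencil
`(I + s g g*, I + r h h*)` with eigenvalue `γ₂`, `s = (1−α)P/(1+αP|g*e₁|²)` and
`r = (1−α)P/(1+αP|h*e₁|²)`:
(i) `tr(K₁+K₂) = P`;
(ii) `(1 + h* K₁ h)/(1 + g* K₁ g) = (1 + αP|h* e₁|²)/(1 + αP|g* e₁|²)`;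
(iii) `[1 + g*(K₁+K₂)g][1 + h* K₁ h] / ([1 + h*(K₁+K₂)h][1 + g* K₁ g]) = γ₂`. -/
theorem stmt_8 (t : ℕ) (ht : 1 ≤ t) (P : ℝ) (hP : 0 < P)
    (α : ℝ) (hα : α ∈ Set.Icc (0 : ℝ) 1)
    (h g e1 c2 : Fin t → ℂ) (γ2 : ℝ)
    (he1 : star e1 ⬝ᵥ e1 = 1) (hc2 : star c2 ⬝ᵥ c2 = 1)
    (s r : ℝ)
    (hs : s = (1 - α) * P / (1 + α * P * ‖star g ⬝ᵥ e1‖ ^ 2))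
    (hr : r = (1 - α) * P / (1 + α * P * ‖star h ⬝ᵥ e1‖ ^ 2))
    (heig : c2 + ((s : ℂ) * (star g ⬝ᵥ c2)) • g
      = (γ2 : ℂ) • (c2 + ((r : ℂ) * (star h ⬝ᵥ c2)) • h))
    (K1 K2 : Matrix (Fin t) (Fin t) ℂ)
    (hK1 : K1 = ((α * P : ℝ) : ℂ) • vecMulVec e1 (star e1))
    (hK2 : K2 = (((1 - α) * P : ℝ) : ℂ) • vecMulVec c2 (star c2)) :
    (K1 + K2).trace = (P : ℂ) ∧
    (1 + star h ⬝ᵥ K1.mulVec h) / (1 + star g ⬝ᵥ K1.mulVec g)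
      = (((1 + α * P * ‖star h ⬝ᵥ e1‖ ^ 2) / (1 + α * P * ‖star g ⬝ᵥ e1‖ ^ 2) : ℝ) : ℂ) ∧
    ((1 + star g ⬝ᵥ (K1 + K2).mulVec g) * (1 + star h ⬝ᵥ K1.mulVec h)) /
      ((1 + star h ⬝ᵥ (K1 + K2).mulVec h) * (1 + star g ⬝ᵥ K1.mulVec g)) = (γ2 : ℂ) :=
  stmt_8_general t P hP α hα h g e1 c2 γ2 he1 hc2 s r hs hr heig K1 K2 hK1 hK2
end

section
/- Let t ≥ 1 be an integer, P > 0, h, g ∈ ℂ^t, and let e₁ be a unit-norm generalized eigenvector of the pencil (I + P h h*, I + P g g*) with eigenvalue λ₁, and assume h* e₁ ≠ 0. Set ρ = (g* e₁)/(h* e₁) and K = P e₁ e₁*. Then the minimum over ν ∈ ℂ of the outer-bound objective (h − νg)* K (h − νg) + 1 + |ν|² − ν̄ρ − ρ̄ν equals λ₁ (1 − |ρ|²). Consequently, when |ρ| < 1, the Sato-type outer-bound rate f₁(ρ, K) = min over ν ∈ ℂ of log₂ [ ((h − νg)* K (h − νg) + 1 + |ν|² − ν̄ρ − ρ̄ν)/(1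 − |ρ|²) ] equals log₂ λ₁, matching the corner point R₁,max = log₂ λ₁ of the secret dirty-paper coding region. -/
open scoped InnerProductSpace ComplexConjugate

/-!
Pairing the eigen-equation with `e₁` gives `1 + P|h* e₁|² = λ₁ (1 + P|g* e₁|²)`. Writing
`g* e₁ = ρ · h* e₁`, this relation turns the objective into the completed square
`F(ν) = λ₁ (1 − |ρ|²) + (1 + P|g* e₁|²) |ν − λ₁ ρ|²`, minimised exactly at `ν = λ₁ ρ`.
Dividing by `1 − |ρ|² > 0` and applying the monotone `log₂` gives the second claim.
-/

/-- The Sato-type outer-bound objective with input covariance `K = P e₁ e₁*`: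
`F(ν) = (h − νg)* K (h − νg) + 1 + |ν|² − ν̄ρ − ρ̄ν
      = P·|e₁*(h − νg)|² + 1 + |ν|² − 2 Re(ν̄ ρ)`. -/
noncomputable def outerObj (t : ℕ) (P : ℝ) (h g e1 : EuclideanSpace ℂ (Fin t))
    (ρ ν : ℂ) : ℝ :=
  P * ‖⟪e1, h - ν • g⟫_ℂ‖ ^ 2 + 1 + ‖ν‖ ^ 2 - 2 * (conj ν * ρ).re

lemma one_add_mul_norm_inner_sq_eq_of_generalized_eigen {E : Type*} [NormedAddCommGroup E]
    [InnerProductSpace ℂ E] {P lam : ℝ} {h g e : E}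
    (he : ‖e‖ = 1)
    (heig : e + ((P : ℂ) * ⟪h, e⟫_ℂ) • h = (lam : ℂ) • (e + ((P : ℂ) * ⟪g, e⟫_ℂ) • g)) :
    1 + P * ‖⟪h, e⟫_ℂ‖ ^ 2 = lam * (1 + P * ‖⟪g, e⟫_ℂ‖ ^ 2) := by
  have hpair := congrArg (fun v : E => ⟪e, v⟫_ℂ) heig
  simp only [inner_add_right, inner_smul_right, inner_self_eq_norm_sq_to_K, he,
    ← inner_conj_symm e h, ← inner_conj_symm e g, mul_assoc, Complex.mul_conj,
    Complex.normSq_eq_norm_sq] at hpair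
  norm_num at hpair
  exact_mod_cast hpair

lemma isLeast_range_add_mul_norm_sub_sq {E : Type*} [SeminormedAddCommGroup E] (m : ℝ) {c : ℝ}
    (hc : 0 ≤ c) (z₀ : E) : IsLeast (Set.range fun z : E => m + c * ‖z - z₀‖ ^ 2) m :=
  ⟨⟨z₀, by simp⟩, by rintro _ ⟨z, rfl⟩; simp only [le_add_iff_nonneg_right]; positivity⟩

lemma scalar_objective_eq_complete_square {P lam : ℝ} {a ρ : ℂ}
    (hk : 1 + P * ‖a‖ ^ 2 = lam * (1 + P * ‖ρ * a‖ ^ 2)) (ν : ℂ) :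
    P * ‖conj a - ν * conj (ρ * a)‖ ^ 2 + 1 + ‖ν‖ ^ 2 - 2 * (conj ν * ρ).re
      = lam * (1 - ‖ρ‖ ^ 2) + (1 + P * ‖ρ * a‖ ^ 2) * ‖ν - (lam : ℂ) * ρ‖ ^ 2 := by
  simp only [Complex.sq_norm, Complex.normSq_apply, Complex.mul_re,
    Complex.mul_im, Complex.sub_re, Complex.sub_im, Complex.conj_re, Complex.conj_im,
    Complex.ofReal_re, Complex.ofReal_im] at hk ⊢
  linear_combination (1 + lam * (ρ.re ^ 2 + ρ.im ^ 2) - 2 * (ν.re * ρ.re + ν.im * ρ.im)) * hk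

lemma outerObj_eq_complete_square {t : ℕ} {P lam : ℝ} {h g e : EuclideanSpace ℂ (Fin t)}
    {ρ : ℂ} (hk : 1 + P * ‖⟪h, e⟫_ℂ‖ ^ 2 = lam * (1 + P * ‖⟪g, e⟫_ℂ‖ ^ 2))
    (hg : ⟪g, e⟫_ℂ = ρ * ⟪h, e⟫_ℂ) (ν : ℂ) :
    outerObj t P h g e ρ ν
      = lam * (1 - ‖ρ‖ ^ 2) + (1 + P * ‖⟪g, e⟫_ℂ‖ ^ 2) * ‖ν - (lam : ℂ) * ρ‖ ^ 2 := by
  rw [hg] at hk ⊢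
  rw [outerObj, inner_sub_right, inner_smul_right, ← inner_conj_symm e h,
    ← inner_conj_symm e g, hg]
  exact scalar_objective_eq_complete_square hk ν

theorem stmt_9_general (t : ℕ) (P : ℝ) (hP : 0 < P)
    (h g e1 : EuclideanSpace ℂ (Fin t)) (lam1 : ℝ)
    (he1 : ‖e1‖ = 1)
    (heig : e1 + ((P : ℂ) * ⟪h, e1⟫_ℂ) • h = (lam1 : ℂ) • (e1 + ((P : ℂ) * ⟪g, e1⟫_ℂ) • g))
    (hne : ⟪h, e1⟫_ℂ ≠ 0) (ρ : ℂ) (hρ : ρ = ⟪g, e1⟫_ℂ / ⟪h, e1⟫_ℂ) :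
    IsLeast {y : ℝ | ∃ ν : ℂ, y = outerObj t P h g e1 ρ ν} (lam1 * (1 - ‖ρ‖ ^ 2)) ∧
    (‖ρ‖ < 1 →
      IsLeast {y : ℝ | ∃ ν : ℂ, y = Real.logb 2 (outerObj t P h g e1 ρ ν / (1 - ‖ρ‖ ^ 2))}
        (Real.logb 2 lam1)) := by
  have hk := one_add_mul_norm_inner_sq_eq_of_generalized_eigen he1 heig
  have hg : ⟪g, e1⟫_ℂ = ρ * ⟪h, e1⟫_ℂ := by rw [hρ, div_mul_cancel₀ _ hne]
  set c := 1 + P * ‖⟪g, e1⟫_ℂ‖ ^ 2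
  have hc : 0 < c := by positivity
  have hlam : 0 < lam1 := pos_of_mul_pos_left (hk ▸ by positivity) hc.le
  have hF := outerObj_eq_complete_square hk hg
  have hmin := isLeast_range_add_mul_norm_sub_sq (lam1 * (1 - ‖ρ‖ ^ 2)) hc.le ((lam1 : ℂ) * ρ)
  have hset : ∀ f : ℂ → ℝ, {y : ℝ | ∃ ν : ℂ, y = f ν} = Set.range f := fun f =>
    Set.ext fun _ => exists_congr fun _ => eq_comm
  refine ⟨by simpa only [hset, hF] using hmin, fun hρ1 => ?_⟩
  have hd : 0 < 1 - ‖ρ‖ ^ 2 := by nlinarith [norm_nonneg ρ]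
  have hlog_mono : MonotoneOn (fun x => Real.logb 2 (x / (1 - ‖ρ‖ ^ 2)))
      (Set.range fun ν : ℂ => lam1 * (1 - ‖ρ‖ ^ 2) + c * ‖ν - (lam1 : ℂ) * ρ‖ ^ 2) :=
    fun x hx y _ hxy => Real.logb_le_logb_of_le one_lt_two (div_pos
      ((mul_pos hlam hd).trans_le (hmin.2 hx)) hd) (div_le_div_of_nonneg_right hxy hd.le)
  simpa only [hset, hF, ← Set.range_comp, Function.comp_def, mul_div_cancel_right₀ _ hd.ne']
    using hlog_mono.map_isLeast hmin

/-- If `e₁` is a unit-norm generalized eigenvector of the pencil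
`(I + P h h*, I + P g g*)` with eigenvalue `λ₁`, `h* e₁ ≠ 0`,
`ρ = (g* e₁)/(h* e₁)` and `K = P e₁ e₁*`, then the minimum over `ν ∈ ℂ` of the
outer-bound objective equals `λ₁(1 − |ρ|²)`; consequently, when `|ρ| < 1` the
Sato-type outer-bound rate `f₁(ρ, K) = min_ν log₂[F(ν)/(1 − |ρ|²)]` equals
`log₂ λ₁`, matching the corner point `R₁,max = log₂ λ₁`. -/
theorem stmt_9 (t : ℕ) (ht : 1 ≤ t) (P : ℝ) (hP : 0 < P)
    (h g e1 : EuclideanSpace ℂ (Fin t)) (lam1 : ℝ)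
    (he1 : ‖e1‖ = 1)
    (heig : e1 + ((P : ℂ) * ⟪h, e1⟫_ℂ) • h = (lam1 : ℂ) • (e1 + ((P : ℂ) * ⟪g, e1⟫_ℂ) • g))
    (hne : ⟪h, e1⟫_ℂ ≠ 0) (ρ : ℂ) (hρ : ρ = ⟪g, e1⟫_ℂ / ⟪h, e1⟫_ℂ) :
    IsLeast {y : ℝ | ∃ ν : ℂ, y = outerObj t P h g e1 ρ ν} (lam1 * (1 - ‖ρ‖ ^ 2)) ∧
    (‖ρ‖ < 1 →
      IsLeast {y : ℝ | ∃ ν : ℂ, y = Real.logb 2 (outerObj t P h g e1 ρ ν / (1 - ‖ρ‖ ^ 2))}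
        (Real.logb 2 lam1)) :=
  stmt_9_general t P hP h g e1 lam1 he1 heig hne ρ hρ
end
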